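/- arXiv:2312.16593 — 3 statements merged into one kernel-verified Lean document; each statement's English description precedes it below -/
import Mathlib

section
/- Let d be a positive integer and let G be a finite simple connected d-regular graph with no C3 or C5 as a subgraph. If every edge of G has positive Lin–Lu–Yau curvature, then κ_LLY(x,y) = 2/d for every edge xy of G. -/
open Finset

noncomputable section

/-- The (normalized) graph Laplacian `Δf(x) = (1/deg x) ∑_{y ~ x} (f y - f x)`. -/
def graphLap {V : Type*} [Fintype V] (G : SimpleGraph V) [DecidableRel G.Adj]
    (f : V → ℝ) (x : V) : ℝ :=
  (G.degree x : ℝ)⁻¹ * ∑ y ∈ G.neighborFinset x, (f y - f x)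

/-- `f` is 1-Lipschitz with respect to the graph distance. -/
def IsLip1 {V : Type*} (G : SimpleGraph V) (f : V → ℝ) : Prop :=
  ∀ u v : V, |f u - f v| ≤ G.dist u v

/-- Lin–Lu–Yau curvature of a pair of vertices, via the limit-free
(Münch–Wojciechowski) formulation. -/
def kappaLLY {V : Type*} [Fintype V] (G : SimpleGraph V) [DecidableRel G.Adj]
    (x y : V) : ℝ :=
  sInf { r : ℝ | ∃ f : V → ℝ, IsLip1 G f ∧ f y - f x = G.dist x y ∧
      r = (graphLap G f x - graphLap G f y) / G.dist x y }

/-- `G` contains a cycle of length `n` as a subgraph: `n` distinct vertices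
arranged cyclically so that consecutive ones are adjacent. -/
def HasCycleLen {V : Type*} (G : SimpleGraph V) (n : ℕ) [NeZero n] : Prop :=
  ∃ c : Fin n → V, Function.Injective c ∧ ∀ i : Fin n, G.Adj (c i) (c (i + 1))

/-!
Write `S = N(x) \ {y}` and `T = N(y) \ {x}`. For a 1-Lipschitz `f` with `f y - f x = 1`,
`d (Δf(x) - Δf(y)) = 2 + ∑_{z ∈ S} (f z - f x) - ∑_{w ∈ T} (f w - f y)`.
Without triangles and pentagons, nonadjacent `z ∈ S` and `w ∈ T` are at distance at least `3`, so
for `U ⊆ S` and `A ⊆ T` with no edges between them, `v ↦ min_{u ∈ {x} ∪ U} (d(u, v) - d(x, u))`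
is 1-Lipschitz, `-1` on `U` and at least `2` on `A`; it shows `κ(x, y) ≤ 2 (d - |U| - |A|) / d`.
Taking `U = S` gives `κ ≤ 2/d`, and `κ > 0` gives Hall's condition, hence a perfect matching
`σ : T → S` along edges. Then `f w - f y ≤ f (σ w) - f x` for every such `f`, so `κ ≥ 2/d`.
-/

namespace SimpleGraph

variable {V : Type*} {G : SimpleGraph V}

lemma hasCycleLen_three_of_adj {a b c : V} (hab : G.Adj a b) (hbc : G.Adj b c)
    (hca : G.Adj c a) : HasCycleLen G 3 := by
  refine ⟨![a, b, c], ?_, fun i => ?_⟩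
  · intro i j hij
    fin_cases i <;> fin_cases j <;>
      simp_all [hab.ne, hbc.ne, hca.ne, hab.ne', hbc.ne', hca.ne']
  · fin_cases i <;> simp [hab, hbc, hca]

lemma hasCycleLen_five_of_adj {a b c d e : V} (hab : G.Adj a b) (hbc : G.Adj b c)
    (hcd : G.Adj c d) (hde : G.Adj d e) (hea : G.Adj e a)
    (hac : a ≠ c) (had : a ≠ d) (hbd : b ≠ d) (hbe : b ≠ e) (hce : c ≠ e) :
    HasCycleLen G 5 := by
  refine ⟨![a, b, c, d, e], ?_, fun i => ?_⟩
  · intro i j hij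
    fin_cases i <;> fin_cases j <;>
      simp_all [hab.ne, hbc.ne, hcd.ne, hde.ne, hea.ne, hab.ne', hbc.ne', hcd.ne', hde.ne',
        hea.ne', hac.symm, had.symm, hbd.symm, hbe.symm, hce.symm]
  · fin_cases i <;> simp [hab, hbc, hcd, hde, hea]

/-- Along an edge `xy`, a neighbour `z` of `x` and a neighbour `w` of `y` that are not adjacent
would close a pentagon `z – m – w – y – x` through any common neighbour `m`. -/
lemma Connected.three_le_dist_of_not_adj (hG : G.Connected) (h3 : ¬ HasCycleLen G 3)
    (h5 : ¬ HasCycleLen G 5) {x y z w : V} (hxy : G.Adj x y) (hxz : G.Adj x z)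
    (hyw : G.Adj y w) (hzw : ¬ G.Adj z w) : 3 ≤ G.dist z w := by
  have hne : z ≠ w := by
    rintro rfl
    exact h3 (hasCycleLen_three_of_adj hxy hyw hxz.symm)
  have hcommon : G.commonNeighbors z w = ∅ := by
    refine Set.eq_empty_iff_forall_notMem.2 fun m hm => ?_
    obtain ⟨hzm, hwm⟩ := G.mem_commonNeighbors.1 hm
    have hzy : z ≠ y := by rintro rfl; exact hzw hyw
    have hwx : w ≠ x := by rintro rfl; exact hzw hxz.symm
    have hmy : m ≠ y := by
      rintro rfl; exact h3 (hasCycleLen_three_of_adj hxy hzm.symm hxz.symm)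
    have hmx : m ≠ x := by
      rintro rfl; exact h3 (hasCycleLen_three_of_adj hxy hyw hwm)
    exact h5 (hasCycleLen_five_of_adj hzm hwm.symm hyw.symm hxy.symm hxz hne hzy hmy hmx hwx)
  have h := two_lt_edist_iff.2 ⟨hne, hzw, hcommon⟩
  rw [← (hG z w).coe_dist_eq_edist] at h
  exact_mod_cast h

end SimpleGraph

open SimpleGraph

section Lipschitz

variable {V : Type*} {G : SimpleGraph V}

lemma isLip1_iff_forall_le {f : V → ℝ} : IsLip1 G f ↔ ∀ u v, f u ≤ f v + G.dist u v := by
  refine ⟨fun hf u v => by linarith [le_abs_self (f u - f v), hf u v], fun hf u v => ?_⟩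
  rw [abs_sub_le_iff]
  constructor
  · linarith [hf u v]
  · linarith [G.dist_comm (u := u) ▸ hf v u]

lemma IsLip1.sub_le_one_of_adj {f : V → ℝ} (hf : IsLip1 G f) {u v : V} (h : G.Adj u v) :
    f u - f v ≤ 1 := by
  have := (abs_le.1 (hf u v)).2
  rwa [dist_eq_one_iff_adj.2 h, Nat.cast_one] at this

lemma SimpleGraph.Connected.isLip1_inf'_add_dist (hG : G.Connected) (B : Finset V)
    (hB : B.Nonempty) (c : V → ℝ) : IsLip1 G fun v => B.inf' hB fun u => c u + G.dist u v := by
  refine isLip1_iff_forall_le.2 fun a b => ?_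
  rw [← sub_le_iff_le_add]
  refine Finset.le_inf' hB _ fun u hu => ?_
  have htri : (G.dist u a : ℝ) ≤ G.dist u b + G.dist a b := by
    have := hG.dist_triangle (u := u) (v := b) (w := a)
    rw [G.dist_comm (u := b)] at this
    exact_mod_cast this
  linarith [Finset.inf'_le (fun u => c u + (G.dist u a : ℝ)) hu]

lemma SimpleGraph.Connected.isLip1_dist (hG : G.Connected) (x : V) :
    IsLip1 G fun v => (G.dist x v : ℝ) := by
  simpa using hG.isLip1_inf'_add_dist {x} (singleton_nonempty x) 0

end Lipschitz

section Curvature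

variable {V : Type*} [Fintype V] {G : SimpleGraph V} [DecidableRel G.Adj]

lemma abs_graphLap_le {f : V → ℝ} (hf : IsLip1 G f) (x : V) : |graphLap G f x| ≤ 1 := by
  have hsum : |∑ y ∈ G.neighborFinset x, (f y - f x)| ≤ G.degree x := by
    refine (abs_sum_le_sum_abs _ _).trans ?_
    refine (sum_le_card_nsmul _ _ 1 fun y hy => ?_).trans (by simp)
    have := hf y x
    rwa [dist_eq_one_iff_adj.2 ((mem_neighborFinset G x y).1 hy).symm, Nat.cast_one] at this
  rw [graphLap, abs_mul, abs_inv, Nat.abs_cast]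
  rcases eq_or_ne (G.degree x) 0 with h | h
  · simp [h]
  · rw [inv_mul_le_iff₀ (by positivity), mul_one]
    exact hsum

lemma neg_two_le_graphLap_sub_div {f : V → ℝ} (hf : IsLip1 G f) (x y : V) :
    -2 ≤ (graphLap G f x - graphLap G f y) / G.dist x y := by
  have hx := abs_le.1 (abs_graphLap_le hf x)
  have hy := abs_le.1 (abs_graphLap_le hf y)
  rcases Nat.eq_zero_or_pos (G.dist x y) with h | h
  · simp [h]
  · have h1 : (1 : ℝ) ≤ G.dist x y := by exact_mod_cast h
    rw [le_div_iff₀ (by positivity)]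
    nlinarith

lemma kappaLLY_le {f : V → ℝ} (hf : IsLip1 G f) {x y : V} (hfxy : f y - f x = G.dist x y) :
    kappaLLY G x y ≤ (graphLap G f x - graphLap G f y) / G.dist x y := by
  refine csInf_le ⟨-2, ?_⟩ ⟨f, hf, hfxy, rfl⟩
  rintro r ⟨g, hg, -, rfl⟩
  exact neg_two_le_graphLap_sub_div hg x y

lemma SimpleGraph.Connected.le_kappaLLY (hG : G.Connected) {x y : V} {c : ℝ}
    (h : ∀ f : V → ℝ, IsLip1 G f → f y - f x = G.dist x y →
      c ≤ (graphLap G f x - graphLap G f y) / G.dist x y) :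
    c ≤ kappaLLY G x y := by
  refine le_csInf ⟨_, _, hG.isLip1_dist x, by simp, rfl⟩ ?_
  rintro r ⟨f, hf, hfxy, rfl⟩
  exact h f hf hfxy

end Curvature

namespace Finset

variable {ι κ : Type*}

lemma sum_le_card_mul_add_card_sdiff_mul [DecidableEq ι] {s t : Finset ι} (hts : t ⊆ s)
    {f : ι → ℝ} {a b : ℝ} (ht : ∀ i ∈ t, f i ≤ a) (hs : ∀ i ∈ s \ t, f i ≤ b) :
    ∑ i ∈ s, f i ≤ #t * a + #(s \ t) * b := by
  rw [← sum_sdiff hts]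
  have h1 := sum_le_card_nsmul _ _ _ hs
  have h2 := sum_le_card_nsmul _ _ _ ht
  simp only [nsmul_eq_mul] at h1 h2
  linarith

lemma sum_le_sum_of_injective_of_card_le {M : Type*} [AddCommMonoid M] [PartialOrder M]
    [IsOrderedAddMonoid M] [DecidableEq κ] {s : Finset ι} {t : Finset κ} {σ : s → κ}
    (hσ : Function.Injective σ) (hσt : ∀ i, σ i ∈ t) (hcard : #t ≤ #s) {f : ι → M}
    {g : κ → M} (hfg : ∀ i : s, f i ≤ g (σ i)) : ∑ i ∈ s, f i ≤ ∑ j ∈ t, g j := by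
  have himage : univ.image σ = t :=
    eq_of_subset_of_card_le (image_subset_iff.2 fun i _ => hσt i)
      (by rwa [card_image_of_injective _ hσ, card_univ, Fintype.card_coe])
  rw [← sum_coe_sort s, ← himage, sum_image fun i _ j _ h => hσ h]
  exact sum_le_sum fun i _ => hfg i

end Finset

section TestFunction

variable {V : Type*} [DecidableEq V] {G : SimpleGraph V} {x y : V}

lemma exists_isLip1_of_forall_not_adj (hG : G.Connected) (h3 : ¬ HasCycleLen G 3)
    (h5 : ¬ HasCycleLen G 5) (hxy : G.Adj x y) {U A : Finset V}
    (hU : ∀ z ∈ U, G.Adj x z ∧ z ≠ y) (hA : ∀ w ∈ A, G.Adj y w ∧ w ≠ x)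
    (hUA : ∀ z ∈ U, ∀ w ∈ A, ¬ G.Adj z w) :
    ∃ F : V → ℝ, IsLip1 G F ∧ F y - F x = 1 ∧ (∀ z ∈ U, F z - F x ≤ -1) ∧
      ∀ w ∈ A, 1 ≤ F w - F y := by
  set F : V → ℝ := fun v =>
    (insert x U).inf' (insert_nonempty x U) fun u => -(G.dist x u : ℝ) + G.dist u v
  have hFlip : IsLip1 G F := hG.isLip1_inf'_add_dist _ _ _
  have hFx : F x ≤ 0 := by
    simpa using inf'_le (fun u => -(G.dist x u : ℝ) + G.dist u x) (mem_insert_self x U)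
  have hFU : ∀ z ∈ U, F z ≤ -1 := fun z hz => by
    simpa [dist_eq_one_iff_adj.2 (hU z hz).1] using
      inf'_le (fun u => -(G.dist x u : ℝ) + G.dist u z) (mem_insert_of_mem hz)
  have hFge : ∀ v (c : ℝ), c ≤ G.dist x v → (∀ z ∈ U, c + 1 ≤ G.dist z v) → c ≤ F v := by
    intro v c hxv hUv
    refine le_inf' _ _ fun u hu => ?_
    rcases mem_insert.1 hu with rfl | hu
    · simpa using hxv
    · rw [dist_eq_one_iff_adj.2 (hU u hu).1, Nat.cast_one]
      linarith [hUv u hu]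
  have hFy : 1 ≤ F y := by
    refine hFge y 1 (by simp [dist_eq_one_iff_adj.2 hxy]) fun z hz => ?_
    have h := hG.one_lt_dist_of_ne_of_not_adj (hU z hz).2
      fun hzy => h3 (hasCycleLen_three_of_adj (hU z hz).1 hzy hxy.symm)
    norm_num
    exact_mod_cast h
  have hFA : ∀ w ∈ A, 2 ≤ F w := fun w hw => by
    have hyw := (hA w hw).1
    refine hFge w 2 ?_ fun z hz => ?_
    · have h := hG.one_lt_dist_of_ne_of_not_adj (hA w hw).2.symm
        fun hxw => h3 (hasCycleLen_three_of_adj hxw hyw.symm hxy.symm)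
      exact_mod_cast h
    · have h := hG.three_le_dist_of_not_adj h3 h5 hxy (hU z hz).1 hyw (hUA z hz w hw)
      norm_num
      exact_mod_cast h
  have hFxy : F y - F x = 1 := le_antisymm (hFlip.sub_le_one_of_adj hxy.symm) (by linarith)
  exact ⟨F, hFlip, hFxy, fun z hz => by linarith [hFU z hz],
    fun w hw => by linarith [hFA w hw]⟩

end TestFunction

section Edge

variable {V : Type*} [Fintype V] [DecidableEq V] {G : SimpleGraph V} [DecidableRel G.Adj]
  {d : ℕ} {x y : V}

lemma card_neighborFinset_erase_add_one (hreg : G.IsRegularOfDegree d) (hxy : G.Adj x y) :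
    #((G.neighborFinset x).erase y) + 1 = d := by
  rw [card_erase_add_one (by simpa using hxy), card_neighborFinset_eq_degree, hreg x]

lemma graphLap_sub_graphLap_of_adj (hreg : G.IsRegularOfDegree d) (hxy : G.Adj x y)
    (f : V → ℝ) :
    graphLap G f x - graphLap G f y =
      (2 * (f y - f x) + ∑ z ∈ (G.neighborFinset x).erase y, (f z - f x)
        - ∑ w ∈ (G.neighborFinset y).erase x, (f w - f y)) / d := by
  rw [graphLap, graphLap, hreg x, hreg y,
    ← add_sum_erase _ _ ((mem_neighborFinset G x y).2 hxy),
    ← add_sum_erase _ _ ((mem_neighborFinset G y x).2 hxy.symm)]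
  ring

lemma kappaLLY_le_of_forall_not_adj (hG : G.Connected) (h3 : ¬ HasCycleLen G 3)
    (h5 : ¬ HasCycleLen G 5) (hreg : G.IsRegularOfDegree d) (hxy : G.Adj x y)
    {U A : Finset V} (hU : U ⊆ (G.neighborFinset x).erase y)
    (hA : A ⊆ (G.neighborFinset y).erase x) (hUA : ∀ z ∈ U, ∀ w ∈ A, ¬ G.Adj z w) :
    kappaLLY G x y ≤ 2 * (d - #U - #A) / d := by
  set S := (G.neighborFinset x).erase y
  set T := (G.neighborFinset y).erase x
  have hS : ∀ z ∈ S, G.Adj x z ∧ z ≠ y := fun z hz => by simpa [S, and_comm] using hz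
  have hT : ∀ w ∈ T, G.Adj y w ∧ w ≠ x := fun w hw => by simpa [T, and_comm] using hw
  obtain ⟨F, hF, hFxy, hFU, hFA⟩ := exists_isLip1_of_forall_not_adj hG h3 h5 hxy
    (fun z hz => hS z (hU hz)) (fun w hw => hT w (hA hw)) hUA
  have hsumS : ∑ z ∈ S, (F z - F x) ≤ #U * (-1) + #(S \ U) * 1 :=
    sum_le_card_mul_add_card_sdiff_mul hU hFU
      fun z hz => hF.sub_le_one_of_adj (hS z (mem_sdiff.1 hz).1).1.symm
  have hsumT : ∑ w ∈ T, -(F w - F y) ≤ #A * (-1) + #(T \ A) * 1 :=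
    sum_le_card_mul_add_card_sdiff_mul hA (fun w hw => by linarith [hFA w hw])
      fun w hw => by linarith [hF.sub_le_one_of_adj (hT w (mem_sdiff.1 hw).1).1]
  have hcardS : (#(S \ U) : ℝ) + #U + 1 = d := by
    exact_mod_cast (card_sdiff_add_card_eq_card hU).symm ▸
      card_neighborFinset_erase_add_one hreg hxy
  have hcardT : (#(T \ A) : ℝ) + #A + 1 = d := by
    exact_mod_cast (card_sdiff_add_card_eq_card hA).symm ▸
      card_neighborFinset_erase_add_one hreg hxy.symm
  have hdist : (G.dist x y : ℝ) = 1 := by simp [dist_eq_one_iff_adj.2 hxy]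
  refine (kappaLLY_le hF (hFxy.trans hdist.symm)).trans ?_
  rw [hdist, div_one, graphLap_sub_graphLap_of_adj hreg hxy]
  rw [sum_neg_distrib] at hsumT
  exact div_le_div_of_nonneg_right (by linarith) (Nat.cast_nonneg d)

lemma kappaLLY_le_two_div (hG : G.Connected) (h3 : ¬ HasCycleLen G 3)
    (h5 : ¬ HasCycleLen G 5) (hreg : G.IsRegularOfDegree d) (hxy : G.Adj x y) :
    kappaLLY G x y ≤ 2 / d := by
  have hcard : (#((G.neighborFinset x).erase y) : ℝ) + 1 = d := by
    exact_mod_cast card_neighborFinset_erase_add_one hreg hxy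
  convert kappaLLY_le_of_forall_not_adj hG h3 h5 hreg hxy subset_rfl (empty_subset _)
    (by simp) using 2
  rw [card_empty, Nat.cast_zero]
  linarith

/-- Hall's condition: if `A ⊆ T` had fewer than `#A` neighbours `N` in `S`, then `U = S \ N` would
give `κ(x, y) ≤ 2 (1 + #N - #A) / d ≤ 0`. -/
lemma exists_matching_of_kappaLLY_pos (hG : G.Connected) (h3 : ¬ HasCycleLen G 3)
    (h5 : ¬ HasCycleLen G 5) (hreg : G.IsRegularOfDegree d) (hxy : G.Adj x y)
    (hκ : 0 < kappaLLY G x y) :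
    ∃ σ : (G.neighborFinset y).erase x → V, Function.Injective σ ∧
      ∀ w, σ w ∈ (G.neighborFinset x).erase y ∧ G.Adj w (σ w) := by
  set S := (G.neighborFinset x).erase y
  suffices hHall : ∀ s : Finset ((G.neighborFinset y).erase x),
      #s ≤ #(s.biUnion fun w => S.filter (G.Adj w)) by
    obtain ⟨σ, hσ, hσS⟩ := (all_card_le_biUnion_card_iff_exists_injective _).1 hHall
    exact ⟨σ, hσ, fun w => mem_filter.1 (hσS w)⟩
  intro s
  set N := s.biUnion fun w => S.filter (G.Adj w)
  have hNS : N ⊆ S := biUnion_subset.2 fun w _ => filter_subset _ _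
  have hbound := kappaLLY_le_of_forall_not_adj hG h3 h5 hreg hxy (sdiff_subset (s := S) (t := N))
    (A := s.map (Function.Embedding.subtype _))
    (fun _ hw => by obtain ⟨w, -, rfl⟩ := mem_map.1 hw; exact w.2) <| by
    simp only [mem_sdiff, mem_map, Function.Embedding.coe_subtype]
    rintro z ⟨hzS, hzN⟩ _ ⟨w, hw, rfl⟩ hzw
    exact hzN (mem_biUnion.2 ⟨w, hw, mem_filter.2 ⟨hzS, hzw.symm⟩⟩)
  have hpos : 0 < (d : ℝ) - #(S \ N) - #s := by
    rw [card_map] at hbound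
    rcases div_pos_iff.1 (hκ.trans_le hbound) with ⟨h, -⟩ | ⟨-, h⟩
    · linarith
    · exact absurd h (not_lt.2 (Nat.cast_nonneg d))
  have hcard : (#(S \ N) : ℝ) + #N + 1 = d := by
    exact_mod_cast (card_sdiff_add_card_eq_card hNS).symm ▸
      card_neighborFinset_erase_add_one hreg hxy
  have : (#s : ℝ) < #N + 1 := by linarith
  exact Nat.lt_succ_iff.1 (by exact_mod_cast this)

lemma two_div_le_kappaLLY_of_matching (hG : G.Connected) (hreg : G.IsRegularOfDegree d)
    (hxy : G.Adj x y) {σ : (G.neighborFinset y).erase x → V} (hσ : Function.Injective σ)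
    (hσS : ∀ w, σ w ∈ (G.neighborFinset x).erase y ∧ G.Adj w (σ w)) :
    2 / d ≤ kappaLLY G x y := by
  refine hG.le_kappaLLY fun f (hf : IsLip1 G f) hfxy => ?_
  have hdist : (G.dist x y : ℝ) = 1 := by simp [dist_eq_one_iff_adj.2 hxy]
  rw [hdist] at hfxy
  have hcard : #((G.neighborFinset x).erase y) ≤ #((G.neighborFinset y).erase x) := by
    have := card_neighborFinset_erase_add_one hreg hxy
    have := card_neighborFinset_erase_add_one hreg hxy.symm
    omega
  have hsum : ∑ w ∈ (G.neighborFinset y).erase x, (f w - f y) ≤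
      ∑ z ∈ (G.neighborFinset x).erase y, (f z - f x) :=
    sum_le_sum_of_injective_of_card_le hσ (fun w => (hσS w).1) hcard
      fun w => by linarith [hf.sub_le_one_of_adj (hσS w).2]
  rw [hdist, div_one, graphLap_sub_graphLap_of_adj hreg hxy]
  exact div_le_div_of_nonneg_right (by linarith) (Nat.cast_nonneg d)

end Edge

theorem regular_constant_curvature_general {V : Type*} [Fintype V] (G : SimpleGraph V)
    [DecidableRel G.Adj] (hconn : G.Connected)
    (d : ℕ) (hreg : G.IsRegularOfDegree d)
    (h3 : ¬ HasCycleLen G 3) (h5 : ¬ HasCycleLen G 5)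
    (hpos : ∀ u v : V, G.Adj u v → 0 < kappaLLY G u v)
    (x y : V) (hxy : G.Adj x y) :
    kappaLLY G x y = 2 / d := by
  classical
  obtain ⟨σ, hσ, hσS⟩ := exists_matching_of_kappaLLY_pos hconn h3 h5 hreg hxy (hpos x y hxy)
  exact le_antisymm (kappaLLY_le_two_div hconn h3 h5 hreg hxy)
    (two_div_le_kappaLLY_of_matching hconn hreg hxy hσ hσS)

theorem regular_constant_curvature {V : Type*} [Fintype V] (G : SimpleGraph V)
    [DecidableRel G.Adj] (hconn : G.Connected)
    (d : ℕ) (hd : 0 < d) (hreg : G.IsRegularOfDegree d)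
    (h3 : ¬ HasCycleLen G 3) (h5 : ¬ HasCycleLen G 5)
    (hpos : ∀ u v : V, G.Adj u v → 0 < kappaLLY G u v)
    (x y : V) (hxy : G.Adj x y) :
    kappaLLY G x y = 2 / d :=
  regular_constant_curvature_general G hconn d hreg h3 h5 hpos x y hxy
end
end

section
/- Let d be a positive integer, let G be a finite simple connected d-regular triangle-free graph, and let xy be an edge of G such that there is a perfect matching between N(x)\{y} and N(y)\{x} (a bijection φ from N(x)\{y} to N(y)\{x} with u adjacent to φ(u) for every u ∈ N(x)\{y}). Then κ_LLY(x,y) = 2/d. -/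
open Finset

noncomputable section

lemma noTriangle_aux {V : Type*} {G : SimpleGraph V} (h3 : ¬ HasCycleLen G 3)
    {a b c : V} (hab : G.Adj a b) (hbc : G.Adj b c) (hca : G.Adj c a) : False := by
  apply h3
  refine ⟨![a, b, c], ?_, ?_⟩
  · intro i j hij
    fin_cases i <;> fin_cases j <;>
      simp_all [hab.ne, hbc.ne, hca.ne, hab.ne', hbc.ne', hca.ne']
  · intro i
    fin_cases i <;> simp [hab, hbc, hca]

theorem curvature_of_matching {V : Type*} [Fintype V] (G : SimpleGraph V)
    [DecidableRel G.Adj] (hconn : G.Connected)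
    (d : ℕ) (hd : 0 < d) (hreg : G.IsRegularOfDegree d)
    (h3 : ¬ HasCycleLen G 3)
    (x y : V) (hxy : G.Adj x y)
    (hmatch : ∃ φ : V → V, Set.BijOn φ (G.neighborSet x \ {y}) (G.neighborSet y \ {x}) ∧
      ∀ u ∈ G.neighborSet x \ {y}, G.Adj u (φ u)) :
    kappaLLY G x y = 2 / d := by
  classical
  obtain ⟨φ, hbij, hadjφ⟩ := hmatch
  have hxne : x ≠ y := hxy.ne
  have hdxy : G.dist x y = 1 := SimpleGraph.dist_eq_one_iff_adj.mpr hxy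
  have hdR : (0:ℝ) < (d:ℝ) := by exact_mod_cast hd
  have hyx : y ∈ G.neighborFinset x := by simpa using hxy
  have hxy' : x ∈ G.neighborFinset y := by simpa using hxy.symm
  set A : Finset V := (G.neighborFinset x).erase y with hA
  set Bf : Finset V := (G.neighborFinset y).erase x with hBf
  have hAmem : ∀ u, u ∈ A ↔ u ∈ G.neighborSet x \ {y} := by
    intro u; simp [hA, Set.mem_diff, and_comm]
  have hBmem : ∀ u, u ∈ Bf ↔ u ∈ G.neighborSet y \ {x} := by
    intro u; simp [hBf, Set.mem_diff, and_comm]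
  have hmaps : ∀ u ∈ A, φ u ∈ Bf := fun u hu => (hBmem _).mpr (hbij.mapsTo ((hAmem u).mp hu))
  have hinj : ∀ u ∈ A, ∀ v ∈ A, φ u = φ v → u = v :=
    fun u hu v hv h => hbij.injOn ((hAmem u).mp hu) ((hAmem v).mp hv) h
  have hsurj : ∀ b ∈ Bf, ∃ a ∈ A, φ a = b := by
    intro b hb
    obtain ⟨a, ha, h⟩ := hbij.surjOn ((hBmem b).mp hb)
    exact ⟨a, (hAmem a).mpr ha, h⟩
  have hadjA : ∀ u ∈ A, G.Adj u (φ u) := fun u hu => hadjφ u ((hAmem u).mp hu)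
  -- reindexing of sums over Bf via φ
  have hsum : ∀ g : V → ℝ, ∑ v ∈ Bf, g v = ∑ u ∈ A, g (φ u) := by
    intro g
    refine (Finset.sum_bij (fun u _ => φ u) (fun a ha => hmaps a ha)
      (fun a₁ ha₁ a₂ ha₂ h => hinj a₁ ha₁ a₂ ha₂ h) ?_ (fun a ha => rfl)).symm
    intro b hb
    obtain ⟨a, ha, h⟩ := hsurj b hb
    exact ⟨a, ha, h⟩
  -- key algebraic identity
  have key : ∀ f : V → ℝ, f y - f x = 1 →
      graphLap G f x - graphLap G f y
        = (d:ℝ)⁻¹ * (2 + ∑ u ∈ A, (f u - f (φ u) + 1)) := by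
    intro f hfyx
    have e1 : ∑ u ∈ G.neighborFinset x, (f u - f x)
        = (f y - f x) + ∑ u ∈ A, (f u - f x) := by
      exact (Finset.add_sum_erase _ (fun u => f u - f x) hyx).symm
    have e2 : ∑ v ∈ G.neighborFinset y, (f v - f y)
        = (f x - f y) + ∑ u ∈ A, (f (φ u) - f y) := by
      rw [← Finset.add_sum_erase _ (fun v => f v - f y) hxy']
      rw [show (G.neighborFinset y).erase x = Bf from rfl, hsum (fun v => f v - f y)]
    have e3 : ∑ u ∈ A, (f u - f (φ u) + 1)
        = ∑ u ∈ A, (f u - f x) - ∑ u ∈ A, (f (φ u) - f y) := by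
      rw [← Finset.sum_sub_distrib]
      apply Finset.sum_congr rfl
      intro u _; linarith
    rw [graphLap, graphLap, hreg x, hreg y, e1, e2, e3]
    linear_combination (2:ℝ) * ((d:ℝ))⁻¹ * hfyx
  -- the set
  set S := { r : ℝ | ∃ f : V → ℝ, IsLip1 G f ∧ f y - f x = G.dist x y ∧
      r = (graphLap G f x - graphLap G f y) / G.dist x y } with hS
  -- lower bound
  have hlow : ∀ r ∈ S, 2 / (d:ℝ) ≤ r := by
    intro r hr
    obtain ⟨f, hf, hfyx, hrval⟩ := hr
    rw [hdxy] at hfyx hrval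
    push_cast at hfyx hrval
    rw [div_one] at hrval
    have hterm : ∀ u ∈ A, (0:ℝ) ≤ f u - f (φ u) + 1 := by
      intro u hu
      have h1 : G.dist u (φ u) = 1 := SimpleGraph.dist_eq_one_iff_adj.mpr (hadjA u hu)
      have := hf u (φ u)
      rw [h1] at this
      push_cast at this
      have := abs_le.mp this
      linarith [this.1]
    have hsum0 : (0:ℝ) ≤ ∑ u ∈ A, (f u - f (φ u) + 1) := Finset.sum_nonneg hterm
    rw [hrval, key f hfyx]
    rw [div_eq_mul_inv, mul_comm]
    have : (2:ℝ) ≤ 2 + ∑ u ∈ A, (f u - f (φ u) + 1) := by linarith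
    have hinv : (0:ℝ) ≤ ((d:ℝ))⁻¹ := by positivity
    nlinarith
  -- witness function
  set B : Finset V := insert x A with hB
  have hBne : B.Nonempty := ⟨x, Finset.mem_insert_self _ _⟩
  set fn : V → ℕ := fun v => B.inf' hBne (fun b => G.dist v b) with hfn
  set f : V → ℝ := fun v => (fn v : ℝ) with hf
  have fn_le : ∀ v b, b ∈ B → fn v ≤ G.dist v b := fun v b hb => Finset.inf'_le _ hb
  have natLip : ∀ u v, fn u ≤ G.dist u v + fn v := by
    intro u v
    obtain ⟨b, hb, hfb⟩ := Finset.exists_mem_eq_inf' hBne (fun b => G.dist v b)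
    calc fn u ≤ G.dist u b := fn_le u b hb
      _ ≤ G.dist u v + G.dist v b := hconn.dist_triangle
      _ = G.dist u v + fn v := by rw [← hfb]
  have hLip : IsLip1 G f := by
    intro u v
    have h1 : (fn u : ℝ) ≤ G.dist u v + fn v := by exact_mod_cast natLip u v
    have h2' := natLip v u
    rw [SimpleGraph.dist_comm] at h2'
    have h2 : (fn v : ℝ) ≤ G.dist u v + fn u := by exact_mod_cast h2'
    rw [abs_sub_le_iff]
    constructor <;> [linarith ; linarith]
  have hfzeroB : ∀ b ∈ B, fn b = 0 := by
    intro b hb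
    have : fn b ≤ G.dist b b := fn_le b b hb
    simpa [SimpleGraph.dist_self] using Nat.le_zero.mp (by simpa [SimpleGraph.dist_self] using this)
  have hpos : ∀ v, v ∉ B → 1 ≤ fn v := by
    intro v hv
    apply Finset.le_inf'
    intro b hb
    have hne : v ≠ b := fun h => hv (h ▸ hb)
    exact Nat.one_le_iff_ne_zero.mpr fun h => hne (hconn.dist_eq_zero_iff.mp h)
  have hyB : y ∉ B := by
    simp only [hB, Finset.mem_insert, hA, Finset.mem_erase]
    push_neg
    exact ⟨hxne.symm, fun h => absurd rfl h⟩
  have hfy : fn y = 1 := by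
    have hle : fn y ≤ 1 := by
      have := fn_le y x (Finset.mem_insert_self _ _)
      rwa [SimpleGraph.dist_eq_one_iff_adj.mpr hxy.symm] at this
    exact le_antisymm hle (hpos y hyB)
  have hfx : fn x = 0 := hfzeroB x (Finset.mem_insert_self _ _)
  have hfA : ∀ u ∈ A, fn u = 0 := fun u hu => hfzeroB u (Finset.mem_insert_of_mem hu)
  have hfBf : ∀ v ∈ Bf, fn v = 1 := by
    intro v hv
    have hvy : G.Adj y v := by
      have := (hBmem v).mp hv
      exact this.1
    have hvx : v ≠ x := by
      have := (hBmem v).mp hv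
      simpa using this.2
    have hvB : v ∉ B := by
      intro hvB
      rcases Finset.mem_insert.mp hvB with h | h
      · exact hvx h
      · have hvNx : G.Adj x v :=
          (SimpleGraph.mem_neighborFinset _ _ _).mp (Finset.mem_of_mem_erase h)
        exact noTriangle_aux h3 hxy hvy hvNx.symm
    have hle : fn v ≤ 1 := by
      obtain ⟨u, hu, huv⟩ := hsurj v hv
      have : fn v ≤ G.dist v u := fn_le v u (Finset.mem_insert_of_mem hu)
      rwa [SimpleGraph.dist_eq_one_iff_adj.mpr (huv ▸ (hadjA u hu)).symm] at this
    exact le_antisymm hle (hpos v hvB)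
  have hfyx : f y - f x = 1 := by simp [hf, hfy, hfx]
  -- value of the witness
  have hval : graphLap G f x - graphLap G f y = 2 / d := by
    rw [key f hfyx]
    have : ∑ u ∈ A, (f u - f (φ u) + 1) = 0 := by
      apply Finset.sum_eq_zero
      intro u hu
      have h1 : f u = 0 := by simp [hf, hfA u hu]
      have h2 : f (φ u) = 1 := by simp [hf, hfBf (φ u) (hmaps u hu)]
      rw [h1, h2]; ring
    rw [this]
    rw [div_eq_mul_inv]; ring
  have hmemS : (2 / (d:ℝ)) ∈ S := by
    refine ⟨f, hLip, ?_, ?_⟩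
    · rw [hdxy]; push_cast; exact hfyx
    · rw [hdxy]; push_cast; rw [div_one]; exact hval.symm
  -- conclude
  rw [kappaLLY, ← hS]
  apply le_antisymm
  · exact csInf_le ⟨2 / d, fun r hr => hlow r hr⟩ hmemS
  · exact le_csInf ⟨2 / d, hmemS⟩ hlow
end
end

section
/- Let G be a finite simple connected graph such that for every edge xy of G, κ_LLY(x,y) ≥ κ₀ for some real κ₀ > 0. Then the diameter of G satisfies diam(G) ≤ 2/κ₀. -/
open Finset

noncomputable section

/-- The Laplacian of a 1-Lipschitz function is bounded by 1 in absolute value. -/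
lemma abs_graphLap_le_one {V : Type*} [Fintype V] (G : SimpleGraph V)
    [DecidableRel G.Adj] {f : V → ℝ} (hf : IsLip1 G f) (x : V) :
    |graphLap G f x| ≤ 1 := by
  unfold graphLap
  rcases Nat.eq_zero_or_pos (G.degree x) with h0 | hpos
  · simp [h0]
  · rw [abs_mul]
    have hdeg : (0:ℝ) < (G.degree x : ℝ) := by exact_mod_cast hpos
    have hsum : |∑ y ∈ G.neighborFinset x, (f y - f x)| ≤ (G.degree x : ℝ) := by
      calc |∑ y ∈ G.neighborFinset x, (f y - f x)|
          ≤ ∑ y ∈ G.neighborFinset x, |f y - f x| := Finset.abs_sum_le_sum_abs _ _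
        _ ≤ ∑ y ∈ G.neighborFinset x, (1:ℝ) := by
            apply Finset.sum_le_sum
            intro y hy
            rw [SimpleGraph.mem_neighborFinset] at hy
            have := hf y x
            rwa [SimpleGraph.dist_comm, SimpleGraph.dist_eq_one_iff_adj.mpr hy,
              Nat.cast_one] at this
        _ = (G.degree x : ℝ) := by
            rw [Finset.sum_const, ← SimpleGraph.card_neighborFinset_eq_degree]
            simp
    rw [abs_inv, abs_of_pos hdeg]
    calc (G.degree x : ℝ)⁻¹ * |∑ y ∈ G.neighborFinset x, (f y - f x)|
        ≤ (G.degree x : ℝ)⁻¹ * (G.degree x : ℝ) := by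
          apply mul_le_mul_of_nonneg_left hsum (by positivity)
      _ = 1 := inv_mul_cancel₀ hdeg.ne'

lemma kappa_le_of_edge {V : Type*} [Fintype V] (G : SimpleGraph V)
    [DecidableRel G.Adj] {x y : V} (hxy : G.Adj x y) {f : V → ℝ}
    (hf : IsLip1 G f) (hfd : f y - f x = G.dist x y) :
    kappaLLY G x y ≤ graphLap G f x - graphLap G f y := by
  have hdist : G.dist x y = 1 := SimpleGraph.dist_eq_one_iff_adj.mpr hxy
  apply csInf_le
  · -- bounded below by -2
    refine ⟨-2, ?_⟩
    rintro r ⟨g, hg, hgd, rfl⟩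
    rw [hdist]
    simp only [Nat.cast_one, div_one]
    have h1 := abs_graphLap_le_one G hg x
    have h2 := abs_graphLap_le_one G hg y
    have := abs_sub (graphLap G g x) (graphLap G g y)
    nlinarith [abs_le.mp h1, abs_le.mp h2]
  · exact ⟨f, hf, hfd, by rw [hdist]; simp⟩

theorem diam_le_of_curvature_bound {V : Type*} [Fintype V] (G : SimpleGraph V)
    [DecidableRel G.Adj] (hconn : G.Connected)
    (κ₀ : ℝ) (hκ₀ : 0 < κ₀)
    (hcurv : ∀ x y : V, G.Adj x y → κ₀ ≤ kappaLLY G x y) :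
    (G.diam : ℝ) ≤ 2 / κ₀ := by
  rcases Nat.eq_zero_or_pos G.diam with h0 | hposd
  · rw [h0]; simp only [Nat.cast_zero]; positivity
  have : Nonempty V := hconn.nonempty
  obtain ⟨u, v, huv⟩ := G.exists_dist_eq_diam
  obtain ⟨p, hp⟩ := hconn.exists_walk_length_eq_dist u v
  set L := p.length with hL
  have hLd : L = G.diam := hp.trans huv
  -- distances along the walk
  have hle : ∀ i, i ≤ L → G.dist u (p.getVert i) ≤ i := by
    intro i hi
    induction i with
    | zero => simp [p.getVert_zero]
    | succ n ih =>
      have hn : n ≤ L := Nat.le_of_succ_le hi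
      have hadj : G.Adj (p.getVert n) (p.getVert (n+1)) :=
        p.adj_getVert_succ (Nat.lt_of_succ_le hi)
      calc G.dist u (p.getVert (n+1))
          ≤ G.dist u (p.getVert n) + G.dist (p.getVert n) (p.getVert (n+1)) :=
            hconn.dist_triangle
        _ ≤ n + 1 := by
            rw [SimpleGraph.dist_eq_one_iff_adj.mpr hadj]
            exact Nat.add_le_add_right (ih hn) 1
  have hsuf : ∀ i, i ≤ L → G.dist (p.getVert i) v ≤ L - i := by
    intro i hi
    have h1 : ∀ j, j ≤ p.reverse.length → G.dist v (p.reverse.getVert j) ≤ j := by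
      intro j hj
      induction j with
      | zero => simp [p.reverse.getVert_zero]
      | succ n ih =>
        have hn : n ≤ p.reverse.length := Nat.le_of_succ_le hj
        have hadj : G.Adj (p.reverse.getVert n) (p.reverse.getVert (n+1)) :=
          p.reverse.adj_getVert_succ (Nat.lt_of_succ_le hj)
        calc G.dist v (p.reverse.getVert (n+1))
            ≤ G.dist v (p.reverse.getVert n) +
              G.dist (p.reverse.getVert n) (p.reverse.getVert (n+1)) :=
              hconn.dist_triangle
          _ ≤ n + 1 := by
              rw [SimpleGraph.dist_eq_one_iff_adj.mpr hadj]
              exact Nat.add_le_add_right (ih hn) 1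
    have h2 := h1 (L - i) (by rw [p.length_reverse]; omega)
    rw [p.getVert_reverse] at h2
    have : L - (L - i) = i := by omega
    rw [this] at h2
    rwa [SimpleGraph.dist_comm]
  have heq : ∀ i, i ≤ L → G.dist u (p.getVert i) = i := by
    intro i hi
    refine le_antisymm (hle i hi) ?_
    have := hconn.dist_triangle (u := u) (v := p.getVert i) (w := v)
    have h2 := hsuf i hi
    have h3 : L ≤ G.dist u v := le_of_eq hp
    omega
  -- the distance function
  set f : V → ℝ := fun z => (G.dist u z : ℝ) with hf
  have hflip : IsLip1 G f := by
    intro a b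
    have h1 : G.dist u a ≤ G.dist u b + G.dist b a := hconn.dist_triangle
    have h2 : G.dist u b ≤ G.dist u a + G.dist a b := hconn.dist_triangle
    have h3 : G.dist b a = G.dist a b := SimpleGraph.dist_comm
    rw [h3] at h1
    have h1' : (G.dist u a : ℝ) ≤ G.dist u b + G.dist a b := by exact_mod_cast h1
    have h2' : (G.dist u b : ℝ) ≤ G.dist u a + G.dist a b := by exact_mod_cast h2
    simp only [hf]
    rw [abs_sub_le_iff]
    constructor <;> linarith
  -- Laplacian at u equals 1
  have hdegu : 0 < G.degree u := by
    rw [SimpleGraph.degree_pos_iff_exists_adj]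
    refine ⟨p.getVert 1, ?_⟩
    have : (0:ℕ) < L := by omega
    simpa [p.getVert_zero] using p.adj_getVert_succ this
  have hlapu : graphLap G f u = 1 := by
    unfold graphLap
    have hsum : ∑ y ∈ G.neighborFinset u, (f y - f u) = (G.degree u : ℝ) := by
      have : ∀ y ∈ G.neighborFinset u, f y - f u = 1 := by
        intro y hy
        rw [SimpleGraph.mem_neighborFinset] at hy
        simp only [hf]
        rw [SimpleGraph.dist_eq_one_iff_adj.mpr hy, SimpleGraph.dist_self]
        norm_num
      rw [Finset.sum_congr rfl this, Finset.sum_const,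
        ← SimpleGraph.card_neighborFinset_eq_degree]
      simp
    rw [hsum]
    exact inv_mul_cancel₀ (by exact_mod_cast hdegu.ne')
  have hlapv : -1 ≤ graphLap G f v := by
    have := abs_graphLap_le_one G hflip v
    linarith [abs_le.mp this |>.1]
  -- telescoping
  have hstep : ∀ i ∈ Finset.range L,
      κ₀ ≤ graphLap G f (p.getVert i) - graphLap G f (p.getVert (i+1)) := by
    intro i hi
    rw [Finset.mem_range] at hi
    have hadj : G.Adj (p.getVert i) (p.getVert (i+1)) := p.adj_getVert_succ hi
    have hfd : f (p.getVert (i+1)) - f (p.getVert i) =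
        G.dist (p.getVert i) (p.getVert (i+1)) := by
      simp only [hf]
      rw [heq i (le_of_lt hi), heq (i+1) hi,
        SimpleGraph.dist_eq_one_iff_adj.mpr hadj]
      push_cast; ring
    exact le_trans (hcurv _ _ hadj) (kappa_le_of_edge G hadj hflip hfd)
  have htel : ∑ i ∈ Finset.range L,
      (graphLap G f (p.getVert i) - graphLap G f (p.getVert (i+1)))
      = graphLap G f u - graphLap G f v := by
    rw [Finset.sum_range_sub' (fun i => graphLap G f (p.getVert i))]
    rw [p.getVert_zero, p.getVert_length]
  have hsum : (L : ℝ) * κ₀ ≤ 2 := by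
    have h1 : (L : ℝ) * κ₀ ≤ ∑ i ∈ Finset.range L,
        (graphLap G f (p.getVert i) - graphLap G f (p.getVert (i+1))) := by
      calc (L : ℝ) * κ₀ = ∑ _i ∈ Finset.range L, κ₀ := by
            rw [Finset.sum_const, Finset.card_range, nsmul_eq_mul]
        _ ≤ _ := Finset.sum_le_sum hstep
    rw [htel] at h1
    linarith [hlapu, hlapv]
  rw [← hLd, le_div_iff₀ hκ₀]
  exact hsum
end
end
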